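/- Let τ₁, τ₂ > 0, I ≥ 1, and T ≥ τ₁ I + τ₂. If K is the unique positive integer with Σ_{k=1}^{K−1}(τ₁ I + τ₂√k) ≤ T ≤ Σ_{k=1}^{K}(τ₁ I + τ₂√k), then (T/(τ₁ I + τ₂))^{2/3} ≤ K ≤ 3·(T/τ₂)^{2/3}. -/
import Mathlib

lemma rpow_three_halves {a : ℝ} (ha : 0 ≤ a) : a ^ ((3:ℝ)/2) = a * Real.sqrt a := by
  rw [Real.sqrt_eq_rpow, show (3:ℝ)/2 = 1 + 1/2 by norm_num,
    Real.rpow_add' ha (by norm_num), Real.rpow_one]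

lemma sum_sqrt_le (n : ℕ) :
    ∑ k ∈ Finset.Icc 1 n, Real.sqrt k ≤ n * Real.sqrt n := by
  calc ∑ k ∈ Finset.Icc 1 n, Real.sqrt k
      ≤ ∑ k ∈ Finset.Icc 1 n, Real.sqrt n := by
        apply Finset.sum_le_sum
        intro k hk
        exact Real.sqrt_le_sqrt (Nat.cast_le.2 (Finset.mem_Icc.1 hk).2)
    _ = n * Real.sqrt n := by
        rw [Finset.sum_const, Nat.card_Icc]
        simp

lemma sum_sqrt_ge (n : ℕ) :
    (2/3 : ℝ) * (n * Real.sqrt n) ≤ ∑ k ∈ Finset.Icc 1 n, Real.sqrt k := by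
  induction n with
  | zero => simp
  | succ n ih =>
    rw [Finset.sum_Icc_succ_top (by omega)]
    set s := Real.sqrt (n+1) with hs
    set t := Real.sqrt n with ht
    have hs2 : s^2 = (n:ℝ)+1 := by
      rw [hs, Real.sq_sqrt (by positivity)]
    have ht2 : t^2 = (n:ℝ) := Real.sq_sqrt (by positivity)
    have hts : t ≤ s := Real.sqrt_le_sqrt (by push_cast; linarith)
    have ht0 : 0 ≤ t := Real.sqrt_nonneg _
    have key : (2/3 : ℝ) * (((n:ℝ)+1) * s) ≤ (2/3 : ℝ) * ((n:ℝ) * t) + s := by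
      rw [← hs2, ← ht2]
      nlinarith [sq_nonneg (s - t), sq_nonneg (s + t), mul_nonneg ht0 (sub_nonneg.2 hts),
        mul_nonneg (mul_nonneg ht0 ht0) (sub_nonneg.2 hts)]
    push_cast
    linarith

theorem episode_count_bound (τ₁ τ₂ I T : ℝ) (K : ℕ)
    (hτ₁ : 0 < τ₁) (hτ₂ : 0 < τ₂) (hI : 1 ≤ I) (hT : τ₁ * I + τ₂ ≤ T)
    (hK : 1 ≤ K)
    (hlow : ∑ k ∈ Finset.Icc 1 (K - 1), (τ₁ * I + τ₂ * Real.sqrt k) ≤ T)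
    (hup : T ≤ ∑ k ∈ Finset.Icc 1 K, (τ₁ * I + τ₂ * Real.sqrt k)) :
    (T / (τ₁ * I + τ₂)) ^ ((2 : ℝ) / 3) ≤ (K : ℝ) ∧
      (K : ℝ) ≤ 3 * (T / τ₂) ^ ((2 : ℝ) / 3) := by
  have hτI : 0 < τ₁ * I := by nlinarith
  have hA : 0 < τ₁ * I + τ₂ := by linarith
  have hT0 : 0 < T := lt_of_lt_of_le hA hT
  have hK1 : (1:ℝ) ≤ (K:ℝ) := by exact_mod_cast hK
  have hsqK : (1:ℝ) ≤ Real.sqrt K := by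
    rw [show (1:ℝ) = Real.sqrt 1 by simp]
    exact Real.sqrt_le_sqrt hK1
  constructor
  · -- lower bound
    have hsplit : ∑ k ∈ Finset.Icc 1 K, (τ₁ * I + τ₂ * Real.sqrt k)
        = K * (τ₁ * I) + τ₂ * ∑ k ∈ Finset.Icc 1 K, Real.sqrt k := by
      rw [Finset.sum_add_distrib, Finset.sum_const, Nat.card_Icc, Finset.mul_sum]
      simp
    have h1 : T ≤ (τ₁ * I + τ₂) * ((K:ℝ) * Real.sqrt K) := by
      have h2 := sum_sqrt_le K
      have h3 : (K:ℝ) ≤ (K:ℝ) * Real.sqrt K := by nlinarith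
      rw [hsplit] at hup
      nlinarith
    have h4 : T / (τ₁ * I + τ₂) ≤ (K:ℝ) ^ ((3:ℝ)/2) := by
      rw [rpow_three_halves (by positivity), div_le_iff₀ hA]
      linarith [h1]
    calc (T / (τ₁ * I + τ₂)) ^ ((2 : ℝ) / 3)
        ≤ ((K:ℝ) ^ ((3:ℝ)/2)) ^ ((2:ℝ)/3) :=
          Real.rpow_le_rpow (by positivity) h4 (by norm_num)
      _ = (K:ℝ) := by
          rw [← Real.rpow_mul (by positivity)]
          norm_num
  · -- upper bound
    set n := K - 1 with hn
    have hcast : ((n:ℕ):ℝ) = (K:ℝ) - 1 := by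
      rw [hn, Nat.cast_sub hK]; simp
    have hsplit : ∑ k ∈ Finset.Icc 1 n, (τ₁ * I + τ₂ * Real.sqrt k)
        = n * (τ₁ * I) + τ₂ * ∑ k ∈ Finset.Icc 1 n, Real.sqrt k := by
      rw [Finset.sum_add_distrib, Finset.sum_const, Nat.card_Icc, Finset.mul_sum]
      simp
    have hnn : (2/3 : ℝ) * τ₂ * ((n:ℝ) * Real.sqrt n) ≤ T := by
      have h2 := sum_sqrt_ge n
      rw [hsplit] at hlow
      nlinarith [Nat.cast_nonneg (α := ℝ) n]
    set x := (T / τ₂) ^ ((2:ℝ)/3) with hx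
    have hTτ : (1:ℝ) ≤ T / τ₂ := by rw [le_div_iff₀ hτ₂]; nlinarith
    have hx0 : 0 ≤ x := by positivity
    have hx1 : (1:ℝ) ≤ x := Real.one_le_rpow hTτ (by norm_num)
    have hxx : x * Real.sqrt x = T / τ₂ := by
      rw [← rpow_three_halves hx0, hx, ← Real.rpow_mul (by positivity)]
      norm_num
    by_contra h
    push_neg at h
    have h2x : 2 * x ≤ (n:ℝ) := by rw [hcast]; linarith
    have hmono : (2*x) * Real.sqrt (2*x) ≤ (n:ℝ) * Real.sqrt n :=
      mul_le_mul h2x (Real.sqrt_le_sqrt h2x) (Real.sqrt_nonneg _)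
        (Nat.cast_nonneg n)
    have hsq2 : Real.sqrt (2*x) = Real.sqrt 2 * Real.sqrt x := Real.sqrt_mul (by norm_num) x
    have h12 : (1:ℝ) ≤ Real.sqrt 2 := by
      rw [show (1:ℝ) = Real.sqrt 1 by simp]
      exact Real.sqrt_le_sqrt (by norm_num)
    have hval : (2*x) * Real.sqrt (2*x) = 2 * Real.sqrt 2 * (T / τ₂) := by
      rw [hsq2, ← hxx]; ring
    have hfin : (2/3:ℝ) * τ₂ * (2 * Real.sqrt 2 * (T / τ₂)) ≤ T := by
      calc (2/3:ℝ) * τ₂ * (2 * Real.sqrt 2 * (T / τ₂))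
          = (2/3:ℝ) * τ₂ * ((2*x) * Real.sqrt (2*x)) := by rw [hval]
        _ ≤ (2/3:ℝ) * τ₂ * ((n:ℝ) * Real.sqrt n) := by nlinarith
        _ ≤ T := hnn
    have hTd : τ₂ * (T / τ₂) = T := mul_div_cancel₀ T (ne_of_gt hτ₂)
    nlinarith [hfin, hTd, hT0, h12]
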